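/- For the cubic Duffing amplitude-response f(X) = ((3/4)μ̃X³ − X(ζ²−1))² + (b̃ζX)² with μ̃ > 0, ζ > 1, b̃ > 0: if (ζ²−1)² > 3 b̃²ζ², then there exist 0 < X₁ < X₂ such that f'(X₁) = f'(X₂) = 0, f is increasing on (0,X₁), decreasing on (X₁,X₂), and increasing on (X₂,∞). -/

import Mathlib

/-!
Writing `c = ζ² − 1` and `d = b ζ`, the derivative of the response is `X · q(X²)` with
`q(u) = (27/8) μ² u² − 6 μ c u + 2 (c² + d²)`. The discriminant of `q` is a positive multiple of
`c² − 3 d²`, so under the hypothesis `q` has the two roots `(8c ∓ 4 √(c² − 3d²)) / (9μ)`, both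
positive because `c > 0`. Hence `f'(X) = (27/8) μ² X (X² − X₁²)(X² − X₂²)`, whose sign on
`(0, ∞)` is `+, −, +` across the square roots `X₁ < X₂` of these roots.
-/

open Set

theorem bistable_of_hasDerivAt {f : ℝ → ℝ} {a X₁ X₂ : ℝ} (ha : 0 < a) (hX₁ : 0 < X₁)
    (hX : X₁ < X₂) (hf : ∀ x, HasDerivAt f (a * x * (x ^ 2 - X₁ ^ 2) * (x ^ 2 - X₂ ^ 2)) x) :
    deriv f X₁ = 0 ∧ deriv f X₂ = 0 ∧ StrictMonoOn f (Ioo 0 X₁) ∧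
      StrictAntiOn f (Ioo X₁ X₂) ∧ StrictMonoOn f (Ioi X₂) := by
  have hderiv (x : ℝ) := (hf x).deriv
  have hcont : Continuous f := continuous_iff_continuousAt.2 fun x => (hf x).continuousAt
  have sq_lt {x y : ℝ} (hx : 0 < x) (h : x < y) : x ^ 2 < y ^ 2 :=
    pow_lt_pow_left₀ h hx.le two_ne_zero
  refine ⟨by simp [hderiv], by simp [hderiv], ?_, ?_, ?_⟩
  · refine strictMonoOn_of_deriv_pos (convex_Ioo 0 X₁) hcont.continuousOn fun x hx => ?_
    rw [interior_Ioo] at hx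
    obtain ⟨hx0, hx1⟩ := hx
    rw [hderiv]
    have h₁ := sq_lt hx0 hx1
    have h₂ := sq_lt hx0 (hx1.trans hX)
    exact mul_pos_of_neg_of_neg (mul_neg_of_pos_of_neg (by positivity) (by linarith))
      (by linarith)
  · refine strictAntiOn_of_deriv_neg (convex_Ioo X₁ X₂) hcont.continuousOn fun x hx => ?_
    rw [interior_Ioo] at hx
    obtain ⟨hx1, hx2⟩ := hx
    rw [hderiv]
    have hx0 := hX₁.trans hx1
    have h₁ := sq_lt hX₁ hx1
    have h₂ := sq_lt hx0 hx2
    exact mul_neg_of_pos_of_neg (mul_pos (by positivity) (by linarith)) (by linarith)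
  · refine strictMonoOn_of_deriv_pos (convex_Ioi X₂) hcont.continuousOn fun x hx => ?_
    rw [interior_Ioi, mem_Ioi] at hx
    rw [hderiv]
    have hX₂ := hX₁.trans hX
    have hx0 := hX₂.trans hx
    have h₁ := sq_lt hX₁ (hX.trans hx)
    have h₂ := sq_lt hX₂ hx
    exact mul_pos (mul_pos (by positivity) (by linarith)) (by linarith)

noncomputable def duffingResponse (μ c d X : ℝ) : ℝ :=
  ((3 / 4) * μ * X ^ 3 - X * c) ^ 2 + (d * X) ^ 2

theorem hasDerivAt_duffingResponse (μ c d x : ℝ) :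
    HasDerivAt (duffingResponse μ c d)
      (2 * ((3 / 4) * μ * x ^ 3 - x * c) * ((9 / 4) * μ * x ^ 2 - c) + 2 * d ^ 2 * x) x := by
  have h := ((((hasDerivAt_pow 3 x).const_mul ((3 : ℝ) / 4 * μ)).sub
    ((hasDerivAt_id x).mul_const c)).pow 2).add (((hasDerivAt_id x).const_mul d).pow 2)
  refine h.congr_deriv ?_
  simp only [id, Pi.sub_apply]
  ring

theorem hasDerivAt_duffingResponse_factored {μ c d s X₁ X₂ : ℝ} (hs : s ^ 2 = c ^ 2 - 3 * d ^ 2)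
    (h₁ : 9 * μ * X₁ ^ 2 = 8 * c - 4 * s) (h₂ : 9 * μ * X₂ ^ 2 = 8 * c + 4 * s) (x : ℝ) :
    HasDerivAt (duffingResponse μ c d)
      (27 / 8 * μ ^ 2 * x * (x ^ 2 - X₁ ^ 2) * (x ^ 2 - X₂ ^ 2)) x := by
  refine (hasDerivAt_duffingResponse μ c d x).congr_deriv ?_
  linear_combination 3 / 8 * μ * x ^ 3 * (h₁ + h₂) + 2 * x / 3 * hs
    - x / 24 * (9 * μ * X₂ ^ 2 * h₁ + (8 * c - 4 * s) * h₂)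

theorem exists_pos_mul_sq_eq {k p : ℝ} (hk : 0 < k) (hp : 0 < p) : ∃ X, 0 < X ∧ k * X ^ 2 = p :=
  ⟨√(p / k), by positivity, by rw [Real.sq_sqrt (by positivity)]; field_simp⟩

theorem cubic_duffing_bistability_general
    (b μ ζ : ℝ) (hμ : 0 < μ) (hζ : 1 < ζ)
    (hcond : (ζ ^ 2 - 1) ^ 2 > 3 * b ^ 2 * ζ ^ 2) :
    ∃ X₁ X₂ : ℝ, 0 < X₁ ∧ X₁ < X₂ ∧
      deriv (fun X : ℝ =>
        ((3 / 4) * μ * X ^ 3 - X * (ζ ^ 2 - 1)) ^ 2 + (b * ζ * X) ^ 2) X₁ = 0 ∧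
      deriv (fun X : ℝ =>
        ((3 / 4) * μ * X ^ 3 - X * (ζ ^ 2 - 1)) ^ 2 + (b * ζ * X) ^ 2) X₂ = 0 ∧
      StrictMonoOn (fun X : ℝ =>
        ((3 / 4) * μ * X ^ 3 - X * (ζ ^ 2 - 1)) ^ 2 + (b * ζ * X) ^ 2) (Set.Ioo 0 X₁) ∧
      StrictAntiOn (fun X : ℝ =>
        ((3 / 4) * μ * X ^ 3 - X * (ζ ^ 2 - 1)) ^ 2 + (b * ζ * X) ^ 2) (Set.Ioo X₁ X₂) ∧
      StrictMonoOn (fun X : ℝ =>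
        ((3 / 4) * μ * X ^ 3 - X * (ζ ^ 2 - 1)) ^ 2 + (b * ζ * X) ^ 2) (Set.Ioi X₂) := by
  set c := ζ ^ 2 - 1
  have hc : 0 < c := by nlinarith
  set s := √(c ^ 2 - 3 * (b * ζ) ^ 2)
  have hs : s ^ 2 = c ^ 2 - 3 * (b * ζ) ^ 2 := Real.sq_sqrt (by linarith)
  have hs_pos : 0 < s := Real.sqrt_pos.2 (by linarith)
  have hsc : s ≤ c := by nlinarith
  have h9μ : 0 < 9 * μ := by positivity
  obtain ⟨X₁, hX₁, h₁⟩ := exists_pos_mul_sq_eq h9μ (by linarith : 0 < 8 * c - 4 * s)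
  obtain ⟨X₂, hX₂, h₂⟩ := exists_pos_mul_sq_eq h9μ (by linarith : 0 < 8 * c + 4 * s)
  have hX : X₁ < X₂ := lt_of_pow_lt_pow_left₀ 2 hX₂.le (by nlinarith)
  exact ⟨X₁, X₂, hX₁, hX,
    bistable_of_hasDerivAt (by positivity) hX₁ hX (hasDerivAt_duffingResponse_factored hs h₁ h₂)⟩

/-- Bistability of the cubic Duffing response: if `(ζ² − 1)² > 3 b² ζ²` then the
amplitude-response `f` has two positive critical points `X₁ < X₂`, being increasing on
`(0, X₁)`, decreasing on `(X₁, X₂)` and increasing on `(X₂, ∞)`. -/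
theorem cubic_duffing_bistability
    (b μ ζ : ℝ) (hb : 0 < b) (hμ : 0 < μ) (hζ : 1 < ζ)
    (hcond : (ζ ^ 2 - 1) ^ 2 > 3 * b ^ 2 * ζ ^ 2) :
    ∃ X₁ X₂ : ℝ, 0 < X₁ ∧ X₁ < X₂ ∧
      deriv (fun X : ℝ =>
        ((3 / 4) * μ * X ^ 3 - X * (ζ ^ 2 - 1)) ^ 2 + (b * ζ * X) ^ 2) X₁ = 0 ∧
      deriv (fun X : ℝ =>
        ((3 / 4) * μ * X ^ 3 - X * (ζ ^ 2 - 1)) ^ 2 + (b * ζ * X) ^ 2) X₂ = 0 ∧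
      StrictMonoOn (fun X : ℝ =>
        ((3 / 4) * μ * X ^ 3 - X * (ζ ^ 2 - 1)) ^ 2 + (b * ζ * X) ^ 2) (Set.Ioo 0 X₁) ∧
      StrictAntiOn (fun X : ℝ =>
        ((3 / 4) * μ * X ^ 3 - X * (ζ ^ 2 - 1)) ^ 2 + (b * ζ * X) ^ 2) (Set.Ioo X₁ X₂) ∧
      StrictMonoOn (fun X : ℝ =>
        ((3 / 4) * μ * X ^ 3 - X * (ζ ^ 2 - 1)) ^ 2 + (b * ζ * X) ^ 2) (Set.Ioi X₂) :=
  cubic_duffing_bistability_general b μ ζ hμ hζ hcond
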